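/- Let f : X → Z be a morphism of schemes. For complexes E on X and F, G on Z, the following diagram built from the projection-formula maps commutes: starting from (Rf_*E ⊗ F) ⊗ G, applying the projection map in F then in G and then the monoidality isomorphism Lf*(F ⊗ G) ≅ Lf*F ⊗ Lf*G agrees with first using associativity (Rf_*E ⊗ F) ⊗ G ≅ Rf_*E ⊗ (F ⊗ G) and then the projection map for F ⊗ G. -/

import Mathlib

open CategoryTheory MonoidalCategory

noncomputable section

variable {CX CZ : Type*} [Category CX] [Category CZ]
  [MonoidalCategory CX] [MonoidalCategory CZ]

/-- The projection map `f_*E ⊗ F ⟶ f_*(E ⊗ f^*F)` of (2.6.3), defined via the unit of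
the adjunction `f^* ⊣ f_*` and the lax monoidal structure of `f_*`. -/
def projMap (fstar : CZ ⥤ CX) [fstar.Monoidal] (fpush : CX ⥤ CZ)
    (adj : fstar ⊣ fpush) [fpush.LaxMonoidal] [adj.IsMonoidal] (E : CX) (F : CZ) :
    fpush.obj E ⊗ F ⟶ fpush.obj (E ⊗ fstar.obj F) :=
  (fpush.obj E ◁ adj.unit.app F) ≫ Functor.LaxMonoidal.μ fpush E (fstar.obj F)

/- The projection map is `f_*E ◁ η_F ≫ μ`. With arbitrary maps `u`, `v` in place of the units
`η_F`, `η_G`, the square is just the associativity of the lax structure `μ` of `f_*`; for the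
units themselves, monoidality of `η` turns `(η_F ⊗ η_G) ≫ μ` into `η_{F ⊗ G} ≫ f_*(δ)`. -/

namespace CategoryTheory.Functor.LaxMonoidal

variable {C D : Type*} [Category C] [Category D] [MonoidalCategory C] [MonoidalCategory D]
  (L : C ⥤ D) [L.LaxMonoidal]

theorem whiskerLeft_comp_μ_associativity
    (E : C) {A B : C} {X Y : D} (u : X ⟶ L.obj A) (v : Y ⟶ L.obj B) :
    (L.obj E ◁ u ≫ μ L E A) ▷ Y ≫ (L.obj (E ⊗ A) ◁ v ≫ μ L (E ⊗ A) B) ≫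
        L.map (α_ E A B).hom =
      (α_ (L.obj E) X Y).hom ≫ L.obj E ◁ ((u ⊗ₘ v) ≫ μ L A B) ≫ μ L E (A ⊗ B) := by
  simp only [comp_whiskerRight, Category.assoc]
  rw [← whisker_exchange_assoc, associativity, MonoidalCategory.tensorHom_def]
  simp only [MonoidalCategory.whiskerLeft_comp, Category.assoc]
  rw [associator_naturality_right_assoc, associator_naturality_middle_assoc]

end CategoryTheory.Functor.LaxMonoidal

/-- Lemma 2.7: compatibility of the projection map with derived tensor product, stated
for an abstract adjunction `f^* ⊣ f_*` with `f^*` (strong) monoidal (so `f_*` is lax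
monoidal); this models `Lf^* ⊣ Rf_*` for a scheme map `f : X → Z`. -/
theorem stmt10 (fstar : CZ ⥤ CX) [fstar.Monoidal] (fpush : CX ⥤ CZ)
    (adj : fstar ⊣ fpush) [fpush.LaxMonoidal] [adj.IsMonoidal] (E : CX) (F G : CZ) :
    (projMap fstar fpush adj E F ▷ G) ≫ projMap fstar fpush adj (E ⊗ fstar.obj F) G ≫
        fpush.map (α_ E (fstar.obj F) (fstar.obj G)).hom =
      (α_ (fpush.obj E) F G).hom ≫ projMap fstar fpush adj E (F ⊗ G) ≫
        fpush.map (E ◁ Functor.OplaxMonoidal.δ fstar F G) := by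
  have hassoc := Functor.LaxMonoidal.whiskerLeft_comp_μ_associativity
    fpush E (adj.unit.app F) (adj.unit.app G)
  rw [← adj.unit_app_tensor_comp_map_δ, whiskerLeft_comp] at hassoc
  simp only [Functor.id_obj, Category.assoc, Functor.LaxMonoidal.μ_natural_right] at hassoc
  simpa only [projMap, Category.assoc] using hassoc

end
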